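/- For all real μ, ν ≥ 0, the total variation distance between the Poisson distributions with means μ and ν satisfies d_TV(Po(μ), Po(ν)) ≤ |√μ − √ν|. -/

import Mathlib

/-- Total variation distance between two probability mass functions on ℕ:
`sup_{A ⊆ ℕ} |P(A) - Q(A)|`. -/
noncomputable def tvDist (f g : ℕ → ℝ) : ℝ :=
  ⨆ A : Set ℕ, |(∑' m : A, f m.1) - (∑' m : A, g m.1)|

/-- The Poisson probability mass function with mean `μ`. -/
noncomputable def poissonPMF (μ : ℝ) (m : ℕ) : ℝ :=
  Real.exp (-μ) * μ ^ m / (m.factorial : ℝ)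

/-!
The total variation distance is half the `ℓ¹` distance, and Le Cam's inequality bounds the
`ℓ¹` distance by `√(4 - 4 BC²)`, where `BC = ∑ √(p q)` is the Bhattacharyya coefficient. The
geometric mean of the Poisson weights of means `μ` and `ν` is `exp (-(√μ - √ν)² / 2)` times the
Poisson weight of mean `√μ √ν`, so `BC = exp (-(√μ - √ν)² / 2)`, and `1 - exp (-x²) ≤ x²`.
-/

section TotalVariation

variable {ι : Type*}

theorem abs_tsum_subtype_le_half_tsum_abs {h : ι → ℝ} (hs : Summable h) (h0 : ∑' i, h i = 0)
    (s : Set ι) : |∑' i : s, h i| ≤ (∑' i, |h i|) / 2 := by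
  have habs : Summable fun i => |h i| := hs.abs
  have hcompl : ∑' i : (sᶜ : Set ι), h i = -∑' i : s, h i := by
    linarith [hs.tsum_subtype_add_tsum_subtype_compl s]
  have abs_tsum_le (t : Set ι) : |∑' i : t, h i| ≤ ∑' i : t, |h i| :=
    norm_tsum_le_tsum_norm (f := fun i : t => h i) (habs.subtype t)
  have hsc_le := abs_tsum_le sᶜ
  rw [hcompl, abs_neg] at hsc_le
  linarith [abs_tsum_le s, habs.tsum_subtype_add_tsum_subtype_compl s]

theorem tvDist_le_half_tsum_abs_sub {f g : ℕ → ℝ} (hf : Summable f) (hg : Summable g)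
    (hfg : ∑' m, f m = ∑' m, g m) : tvDist f g ≤ (∑' m, |f m - g m|) / 2 := by
  refine ciSup_le fun A => ?_
  have hdiff : ∑' m : A, f m - ∑' m : A, g m = ∑' m : A, (f m - g m) :=
    ((hf.subtype A).tsum_sub (hg.subtype A)).symm
  rw [hdiff]
  exact abs_tsum_subtype_le_half_tsum_abs (hf.sub hg) (by rw [hf.tsum_sub hg, hfg, sub_self]) A

theorem summable_sqrt_mul {p q : ι → ℝ} (hp : 0 ≤ p) (hq : 0 ≤ q) (hps : Summable p)
    (hqs : Summable q) : Summable fun i => √(p i * q i) := by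
  refine ((hps.add hqs).div_const 2).of_nonneg_of_le (fun i => Real.sqrt_nonneg _) fun i => ?_
  rw [Real.sqrt_mul (hp i)]
  nlinarith [sq_nonneg (√(p i) - √(q i)), Real.sq_sqrt (hp i), Real.sq_sqrt (hq i)]

/-- Le Cam's inequality, from `|p - q| = |√p - √q| (√p + √q)` and Cauchy–Schwarz. -/
theorem tsum_abs_sub_le_sqrt {p q : ι → ℝ} (hp : 0 ≤ p) (hq : 0 ≤ q) (hps : Summable p)
    (hqs : Summable q) :
    ∑' i, |p i - q i| ≤ √((∑' i, p i + ∑' i, q i) ^ 2 - 4 * (∑' i, √(p i * q i)) ^ 2) := by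
  set a := fun i => √(p i)
  set b := fun i => √(q i)
  set S := ∑' i, p i + ∑' i, q i
  set B := ∑' i, √(p i * q i)
  have hB := summable_sqrt_mul hp hq hps hqs
  have hab i : √(p i * q i) = a i * b i := Real.sqrt_mul (hp i) _
  have hsub_sq i : (a i - b i) ^ 2 = p i + q i - 2 * √(p i * q i) := by
    rw [hab, ← Real.sq_sqrt (hp i), ← Real.sq_sqrt (hq i)]; ring
  have hadd_sq i : (a i + b i) ^ 2 = p i + q i + 2 * √(p i * q i) := by
    rw [hab, ← Real.sq_sqrt (hp i), ← Real.sq_sqrt (hq i)]; ring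
  have hsub_sum : HasSum (fun i => (a i - b i) ^ 2) (S - 2 * B) := by
    simpa only [hsub_sq] using (hps.hasSum.add hqs.hasSum).sub (hB.hasSum.mul_left 2)
  have hadd_sum : HasSum (fun i => (a i + b i) ^ 2) (S + 2 * B) := by
    simpa only [hadd_sq] using (hps.hasSum.add hqs.hasSum).add (hB.hasSum.mul_left 2)
  have hSB : 0 ≤ S - 2 * B := hsub_sum.nonneg fun i => sq_nonneg _
  refine Real.tsum_le_of_sum_le (fun i => abs_nonneg _) fun t => ?_
  calc ∑ i ∈ t, |p i - q i| = ∑ i ∈ t, |a i - b i| * (a i + b i) := by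
        refine Finset.sum_congr rfl fun i _ => ?_
        rw [← Real.sq_sqrt (hp i), ← Real.sq_sqrt (hq i), sq_sub_sq, abs_mul,
          abs_of_nonneg (add_nonneg (Real.sqrt_nonneg _) (Real.sqrt_nonneg _)), mul_comm]
    _ ≤ √(∑ i ∈ t, |a i - b i| ^ 2) * √(∑ i ∈ t, (a i + b i) ^ 2) :=
        Real.sum_mul_le_sqrt_mul_sqrt _ _ _
    _ ≤ √(S - 2 * B) * √(S + 2 * B) := by
        simp only [sq_abs]
        gcongr
        · exact sum_le_hasSum t (fun i _ => sq_nonneg _) hsub_sum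
        · exact sum_le_hasSum t (fun i _ => sq_nonneg _) hadd_sum
    _ = √(S ^ 2 - 4 * B ^ 2) := by
        rw [← Real.sqrt_mul hSB]; ring_nf

end TotalVariation

section Poisson

theorem hasSum_poissonPMF (μ : ℝ) : HasSum (poissonPMF μ) 1 := by
  have h := (NormedSpace.expSeries_div_hasSum_exp μ).mul_left (Real.exp (-μ))
  rw [← Real.exp_eq_exp_ℝ, ← Real.exp_add, neg_add_cancel, Real.exp_zero] at h
  exact h.congr_fun fun m => by rw [poissonPMF, mul_div_assoc]

theorem poissonPMF_nonneg {μ : ℝ} (hμ : 0 ≤ μ) : 0 ≤ poissonPMF μ :=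
  fun m => by unfold poissonPMF; positivity

theorem sqrt_poissonPMF_mul {μ ν : ℝ} (hμ : 0 ≤ μ) (hν : 0 ≤ ν) (m : ℕ) :
    √(poissonPMF μ m * poissonPMF ν m) =
      Real.exp (-(√μ - √ν) ^ 2 / 2) * poissonPMF (√μ * √ν) m := by
  have hexp : Real.exp (-(√μ - √ν) ^ 2 / 2) ^ 2 * Real.exp (-(√μ * √ν)) ^ 2 =
      Real.exp (-μ) * Real.exp (-ν) := by
    rw [← Real.exp_nat_mul, ← Real.exp_nat_mul, ← Real.exp_add, ← Real.exp_add]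
    congr 1
    linear_combination -(Real.sq_sqrt hμ + Real.sq_sqrt hν)
  rw [← Real.sqrt_sq (mul_nonneg (Real.exp_nonneg _)
    (poissonPMF_nonneg (mul_nonneg (Real.sqrt_nonneg μ) (Real.sqrt_nonneg ν)) m))]
  congr 1
  simp only [poissonPMF, mul_pow, div_pow, ← pow_mul]
  rw [mul_comm m 2, pow_mul, pow_mul, Real.sq_sqrt hμ, Real.sq_sqrt hν]
  linear_combination -(μ ^ m * ν ^ m / (m.factorial : ℝ) ^ 2) * hexp

theorem tsum_sqrt_poissonPMF_mul {μ ν : ℝ} (hμ : 0 ≤ μ) (hν : 0 ≤ ν) :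
    ∑' m, √(poissonPMF μ m * poissonPMF ν m) = Real.exp (-(√μ - √ν) ^ 2 / 2) := by
  simp_rw [sqrt_poissonPMF_mul hμ hν, tsum_mul_left, (hasSum_poissonPMF _).tsum_eq, mul_one]

end Poisson

/-- Lemma 2.8: the total variation distance between two Poisson distributions is
at most `|√μ - √ν|`. -/
theorem poisson_tvDist_le (μ ν : ℝ) (hμ : 0 ≤ μ) (hν : 0 ≤ ν) :
    tvDist (poissonPMF μ) (poissonPMF ν) ≤ |Real.sqrt μ - Real.sqrt ν| := by
  have hp := hasSum_poissonPMF μ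
  have hq := hasSum_poissonPMF ν
  set B := Real.exp (-(√μ - √ν) ^ 2 / 2)
  have hB : 1 - (√μ - √ν) ^ 2 ≤ B ^ 2 :=
    calc 1 - (√μ - √ν) ^ 2 ≤ Real.exp (-(√μ - √ν) ^ 2) := by
          linarith [Real.add_one_le_exp (-(√μ - √ν) ^ 2)]
      _ = B ^ 2 := by rw [← Real.exp_nat_mul]; ring_nf
  calc tvDist (poissonPMF μ) (poissonPMF ν)
      ≤ (∑' m, |poissonPMF μ m - poissonPMF ν m|) / 2 :=
        tvDist_le_half_tsum_abs_sub hp.summable hq.summable (by rw [hp.tsum_eq, hq.tsum_eq])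
    _ ≤ √((1 + 1) ^ 2 - 4 * B ^ 2) / 2 := by
        gcongr
        simpa only [hp.tsum_eq, hq.tsum_eq, tsum_sqrt_poissonPMF_mul hμ hν] using
          tsum_abs_sub_le_sqrt (poissonPMF_nonneg hμ) (poissonPMF_nonneg hν) hp.summable hq.summable
    _ ≤ √((2 * |√μ - √ν|) ^ 2) / 2 := by
        gcongr
        rw [mul_pow, sq_abs]
        linarith
    _ = |√μ - √ν| := by
        rw [Real.sqrt_sq (by positivity)]
        ring
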